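/- For n ≥ 2, the function H has no absorbing element: there is no a ∈ [0,1] such that for every x ∈ [0,1]^n and every index i, H applied to the vector obtained from x by replacing its i-th coordinate with a equals a. -/

import Mathlib

/-- The median of a vector `x : Fin n → ℝ`, computed from a non-decreasing
rearrangement of `x`. -/
noncomputable def med {n : ℕ} (x : Fin n → ℝ) : ℝ :=
  if hn : 0 < n then
    if n % 2 = 1 then (x ∘ Tuple.sort x) ⟨n / 2, by omega⟩
    else ((x ∘ Tuple.sort x) ⟨n / 2 - 1, by omega⟩ +
            (x ∘ Tuple.sort x) ⟨n / 2, by omega⟩) / 2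
  else 0

open Classical in
/-- The median-based weight functions. -/
noncomputable def hw {n : ℕ} (i : Fin n) (x : Fin n → ℝ) : ℝ :=
  if ∃ c : ℝ, ∀ j, x j = c then 1 / (n : ℝ)
  else (1 / ((n : ℝ) - 1)) * (1 - |x i - med x| / ∑ j, |x j - med x|)

/-- The DYOWA function `H` associated to the median-based weight functions. -/
noncomputable def Hmed {n : ℕ} (x : Fin n → ℝ) : ℝ :=
  ∑ i, hw i x * x i

/-!
Off constant vectors the weights `h_i` sum to one, so for `y` obtained from a constant
vector `c ≠ a` by setting one coordinate to `a` we get `H(y) = c + h_i(y) (a - c)`, and `H(y) = a`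
would force `h_i(y) = 1`. But `h_i ≤ 1/(n-1)`, which is `< 1` for `n ≥ 3`, and for `n = 2` the
median of `y` is `(a + c)/2 ≠ a`, which makes `h_i(y)` strictly smaller than `1/(n-1) = 1`.
-/

lemma not_exists_forall_update_eq {ι : Type*} [DecidableEq ι] [Nontrivial ι] {a c : ℝ}
    (i : ι) (hac : a ≠ c) : ¬ ∃ k, ∀ j, Function.update (fun _ : ι => c) i a j = k := by
  rintro ⟨k, hk⟩
  obtain ⟨j, hj⟩ := exists_ne i
  have hi := hk i
  have hj' := hk j
  rw [Function.update_self] at hi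
  rw [Function.update_of_ne hj] at hj'
  exact hac (hi.trans hj'.symm)

section Weights

variable {n : ℕ} {x : Fin n → ℝ}

lemma two_le_of_not_exists_const (hx : ¬ ∃ c, ∀ j, x j = c) : 2 ≤ n := by
  by_contra! hn
  refine hx ⟨if h : 0 < n then x ⟨0, h⟩ else 0, fun j => ?_⟩
  rw [dif_pos j.pos]
  exact congrArg x (Fin.ext (by omega))

lemma sum_abs_sub_med_pos (hx : ¬ ∃ c, ∀ j, x j = c) : 0 < ∑ j, |x j - med x| := by
  refine (Finset.sum_nonneg fun j _ => abs_nonneg _).lt_of_ne fun h => hx ⟨med x, fun j => ?_⟩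
  have := (Finset.sum_eq_zero_iff_of_nonneg fun j _ => abs_nonneg (x j - med x)).mp h.symm j
    (Finset.mem_univ j)
  exact sub_eq_zero.mp (abs_eq_zero.mp this)

lemma sum_hw (hn : 0 < n) (x : Fin n → ℝ) : ∑ i, hw i x = 1 := by
  by_cases hx : ∃ c, ∀ j, x j = c
  · simp only [hw, if_pos hx, Finset.sum_const, Finset.card_univ, Fintype.card_fin, nsmul_eq_mul]
    field_simp
  · have hS := (sum_abs_sub_med_pos hx).ne'
    have hn1 : (n : ℝ) - 1 ≠ 0 := by
      have : (2 : ℝ) ≤ n := by exact_mod_cast two_le_of_not_exists_const hx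
      linarith
    simp only [hw, if_neg hx, ← Finset.mul_sum, Finset.sum_sub_distrib, ← Finset.sum_div,
      div_self hS, Finset.sum_const, Finset.card_univ, Fintype.card_fin, nsmul_eq_mul, mul_one]
    field_simp

lemma hw_le_inv_pred (hx : ¬ ∃ c, ∀ j, x j = c) (i : Fin n) : hw i x ≤ 1 / ((n : ℝ) - 1) := by
  have hn : (2 : ℝ) ≤ n := by exact_mod_cast two_le_of_not_exists_const hx
  rw [hw, if_neg hx]
  have : 0 ≤ |x i - med x| / ∑ j, |x j - med x| :=
    div_nonneg (abs_nonneg _) (sum_abs_sub_med_pos hx).le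
  exact mul_le_of_le_one_right (by rw [one_div_nonneg]; linarith) (by linarith)

lemma hw_lt_inv_pred (hx : ¬ ∃ c, ∀ j, x j = c) {i : Fin n} (hi : x i ≠ med x) :
    hw i x < 1 / ((n : ℝ) - 1) := by
  have hn : (2 : ℝ) ≤ n := by exact_mod_cast two_le_of_not_exists_const hx
  rw [hw, if_neg hx]
  have : 0 < |x i - med x| / ∑ j, |x j - med x| :=
    div_pos (abs_pos.mpr (sub_ne_zero.mpr hi)) (sum_abs_sub_med_pos hx)
  exact mul_lt_of_lt_one_right (by rw [one_div_pos]; linarith) (by linarith)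

end Weights

lemma med_fin_two (x : Fin 2 → ℝ) : med x = (x 0 + x 1) / 2 := by
  have h := Equiv.sum_comp (Tuple.sort x) x
  rw [Fin.sum_univ_two, Fin.sum_univ_two] at h
  simpa [med] using h

lemma Hmed_update_const {n : ℕ} (i : Fin n) (a c : ℝ) :
    Hmed (Function.update (fun _ : Fin n => c) i a) =
      c + hw i (Function.update (fun _ : Fin n => c) i a) * (a - c) := by
  set y := Function.update (fun _ : Fin n => c) i a
  have hy : ∀ j, y j = c + if j = i then a - c else 0 := fun j => by
    by_cases h : j = i <;> simp [y, h]
  simp only [Hmed, hy, mul_add, mul_ite, mul_zero, Finset.sum_add_distrib, ← Finset.sum_mul,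
    sum_hw i.pos, Finset.sum_ite_eq', Finset.mem_univ, if_true, one_mul]

/-- The function `H` has no absorbing element. -/
theorem Hmed_no_absorbing_element {n : ℕ} (hn : 2 ≤ n) :
    ¬ ∃ a ∈ Set.Icc (0 : ℝ) 1, ∀ x : Fin n → ℝ,
      (∀ j, x j ∈ Set.Icc (0 : ℝ) 1) → ∀ i : Fin n,
      Hmed (Function.update x i a) = a := by
  rintro ⟨a, -, habs⟩
  obtain ⟨c, hc, hca⟩ : ∃ c ∈ Set.Icc (0 : ℝ) 1, c ≠ a := by
    rcases eq_or_ne a 0 with rfl | ha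
    exacts [⟨1, by norm_num, one_ne_zero⟩, ⟨0, by norm_num, ha.symm⟩]
  have : Nontrivial (Fin n) := Fin.nontrivial_iff_two_le.mpr hn
  let i : Fin n := ⟨0, by omega⟩
  set y := Function.update (fun _ : Fin n => c) i a
  have hy : ¬ ∃ k, ∀ j, y j = k := not_exists_forall_update_eq i hca.symm
  have hwi : hw i y = 1 := by
    have key := habs _ (fun _ => hc) i
    rw [Hmed_update_const] at key
    have : (hw i y - 1) * (a - c) = 0 := by linarith
    linarith [(mul_eq_zero.mp this).resolve_right (sub_ne_zero.mpr hca.symm)]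
  refine hwi.not_lt ?_
  rcases hn.eq_or_lt with rfl | h3
  · have hyi : y i ≠ med y := by
      have h0 : y i = a := Function.update_self _ _ _
      have h1 : y 1 = c := Function.update_of_ne (by simp [i]) _ _
      rw [med_fin_two, show (0 : Fin 2) = i from rfl, h0, h1]
      intro h
      exact hca (by linarith)
    exact (hw_lt_inv_pred hy hyi).trans_eq (by norm_num)
  · have h3 : (3 : ℝ) ≤ n := by exact_mod_cast h3
    calc hw i y ≤ 1 / ((n : ℝ) - 1) := hw_le_inv_pred hy i
      _ < 1 := by rw [div_lt_one (by linarith)]; linarith
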